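/- arXiv:1712.07503 — 3 statements merged into one kernel-verified Lean document; each statement's English description precedes it below -/
import Mathlib

section
/- More generally, let {φ_i} be a sequence of polynomials satisfying the three-term recurrence tφ_i = α_i φ_{i+1} + β_i φ_i + γ_i φ_{i−1} for i ≥ 1 with φ_0 = 1, φ_1 = (t−β_0)/α_0, with all α_i ≠ 0. Define η_{i,j} by φ_i' = Σ_{j=0}^{i−1} η_{i,j} φ_j. Then for i ≥ 1: η_{i+1,j} = (1/α_i)(α_{j−1}η_{i,j−1} + (β_j−β_i)η_{i,j} + γ_{j+1}η_{i,j+1} − γ_i η_{i−1,j}) for j = 0,…,i−2, and η_{i+1,i} = (1/α_i)(α_{i−1}η_{i,i−1} + 1), with the convention α_{−1}η_{i,−1} = 0. -/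
open Polynomial Finset

lemma aux_coeff_ne (φ : ℕ → Polynomial ℝ) (hdeg : ∀ i, (φ i).natDegree = i)
    (hφ0 : φ 0 = 1) (n : ℕ) : (φ n).coeff n ≠ 0 := by
  cases n with
  | zero => simp [hφ0]
  | succ n =>
    have h1 : φ (n+1) ≠ 0 := by
      intro h; have := hdeg (n+1); rw [h] at this; simp at this
    have h2 := Polynomial.leadingCoeff_ne_zero.mpr h1
    rwa [Polynomial.leadingCoeff, hdeg] at h2

lemma aux_zero (φ : ℕ → Polynomial ℝ) (hdeg : ∀ i, (φ i).natDegree = i)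
    (hφ0 : φ 0 = 1) :
    ∀ (n : ℕ) (e : ℕ → ℝ), (∑ k ∈ Finset.range n, Polynomial.C (e k) * φ k) = 0 →
    ∀ k < n, e k = 0 := by
  intro n
  induction n with
  | zero => intro e _ k hk; omega
  | succ n ih =>
    intro e h k hk
    have hen : e n = 0 := by
      have hc := congrArg (fun p => Polynomial.coeff p n) h
      simp only [Finset.sum_range_succ, Polynomial.coeff_add,
        Polynomial.finset_sum_coeff, Polynomial.coeff_C_mul] at hc
      have hz : ∀ j ∈ Finset.range n, e j * (φ j).coeff n = 0 := by
        intro j hj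
        rw [Polynomial.coeff_eq_zero_of_natDegree_lt (by rw [hdeg]; exact Finset.mem_range.mp hj),
          mul_zero]
      rw [Finset.sum_eq_zero hz, zero_add] at hc
      exact (mul_eq_zero.mp hc).resolve_right (aux_coeff_ne φ hdeg hφ0 n)
    rcases Nat.lt_succ_iff_lt_or_eq.mp hk with h' | rfl
    · apply ih e _ k h'
      rw [Finset.sum_range_succ, hen, map_zero, zero_mul, add_zero] at h
      exact h
    · exact hen

lemma aux_eq (φ : ℕ → Polynomial ℝ) (hdeg : ∀ i, (φ i).natDegree = i)
    (hφ0 : φ 0 = 1) (n : ℕ) (c d : ℕ → ℝ)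
    (h : (∑ k ∈ Finset.range n, Polynomial.C (c k) * φ k) =
         ∑ k ∈ Finset.range n, Polynomial.C (d k) * φ k) :
    ∀ k < n, c k = d k := by
  intro k hk
  have h0 : (∑ k ∈ Finset.range n, Polynomial.C (c k - d k) * φ k) = 0 := by
    simp only [map_sub, sub_mul, Finset.sum_sub_distrib, h, sub_self]
  have h1 := aux_zero φ hdeg hφ0 n (fun k => c k - d k) h0 k hk
  simp only [sub_eq_zero] at h1
  exact h1

lemma aux_master (φ : ℕ → Polynomial ℝ) (α β γ : ℕ → ℝ)
    (hdeg : ∀ i : ℕ, (φ i).natDegree = i)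
    (hφ0 : φ 0 = 1)
    (hφ1 : Polynomial.C (α 0) * φ 1 = Polynomial.X - Polynomial.C (β 0))
    (hrec : ∀ i : ℕ, 1 ≤ i →
      Polynomial.X * φ i =
        Polynomial.C (α i) * φ (i + 1) + Polynomial.C (β i) * φ i +
          Polynomial.C (γ i) * φ (i - 1))
    (η : ℕ → ℕ → ℝ)
    (hη : ∀ i : ℕ, Polynomial.derivative (φ i) =
      ∑ j ∈ Finset.range i, Polynomial.C (η i j) * φ j)
    (m : ℕ) : ∀ k < m + 2, α (m+1) * η (m+2) k =
      (if k = m+1 then (1:ℝ) else 0)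
      + (if k = 0 then 0 else α (k-1) * η (m+1) (k-1))
      + (if k < m+1 then (β k - β (m+1)) * η (m+1) k else 0)
      + (if k < m then γ (k+1) * η (m+1) (k+1) else 0)
      - (if k < m then γ (m+1) * η m k else 0) := by
  have hX : ∀ j : ℕ, X * φ j = C (α j) * φ (j+1) + C (β j) * φ j
      + C (if j = 0 then (0:ℝ) else γ j) * φ (j-1) := by
    intro j
    cases j with
    | zero =>
      rw [if_pos rfl, map_zero, zero_mul, add_zero, hφ0, mul_one, mul_one, hφ1]
      ring
    | succ j => simpa using hrec (j+1) (by omega)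
  -- differentiate the recurrence at i = m+1
  have hd := congrArg (⇑Polynomial.derivative) (hrec (m+1) (by omega))
  simp only [derivative_add, derivative_mul, derivative_X, derivative_C, one_mul, zero_mul,
    add_zero, zero_add, Nat.add_sub_cancel] at hd
  rw [hη (m+1+1), hη (m+1), hη m] at hd
  set A : Polynomial ℝ := ∑ j ∈ range (m+1), C (η (m+1) j) * φ j with hA
  set B : Polynomial ℝ := ∑ j ∈ range m, C (η m j) * φ j with hB
  set S : Polynomial ℝ := ∑ j ∈ range (m+2), C (η (m+2) j) * φ j with hS
  -- the key sum identity
  have key : (∑ k ∈ range (m+2), C (α (m+1) * η (m+2) k) * φ k) =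
      ∑ k ∈ range (m+2), C ((if k = m+1 then (1:ℝ) else 0)
      + (if k = 0 then 0 else α (k-1) * η (m+1) (k-1))
      + (if k < m+1 then (β k - β (m+1)) * η (m+1) k else 0)
      + (if k < m then γ (k+1) * η (m+1) (k+1) else 0)
      - (if k < m then γ (m+1) * η m k else 0)) * φ k := by
    have hL : (∑ k ∈ range (m+2), C (α (m+1) * η (m+2) k) * φ k) = C (α (m+1)) * S := by
      rw [hS, Finset.mul_sum]
      exact Finset.sum_congr rfl fun k _ => by rw [map_mul, mul_assoc]
    have hXA : X * A = (∑ j ∈ range (m+1), C (α j * η (m+1) j) * φ (j+1))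
        + (∑ j ∈ range (m+1), C (β j * η (m+1) j) * φ j)
        + (∑ j ∈ range (m+1), C ((if j = 0 then (0:ℝ) else γ j) * η (m+1) j) * φ (j-1)) := by
      rw [hA, Finset.mul_sum, ← Finset.sum_add_distrib, ← Finset.sum_add_distrib]
      refine Finset.sum_congr rfl fun j _ => ?_
      calc X * (C (η (m+1) j) * φ j) = C (η (m+1) j) * (X * φ j) := by ring
      _ = _ := by rw [hX j, map_mul, map_mul, map_mul]; ring
    have hS1 : (∑ k ∈ range (m+2),
        C (if k = 0 then (0:ℝ) else α (k-1) * η (m+1) (k-1)) * φ k)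
        = ∑ j ∈ range (m+1), C (α j * η (m+1) j) * φ (j+1) := by
      rw [Finset.sum_range_succ']
      simp
    have hS3 : (∑ j ∈ range (m+1), C ((if j = 0 then (0:ℝ) else γ j) * η (m+1) j) * φ (j-1))
        = ∑ k ∈ range m, C (γ (k+1) * η (m+1) (k+1)) * φ k := by
      rw [Finset.sum_range_succ']
      simp
    have hbeta : (∑ j ∈ range (m+1), C (β j * η (m+1) j) * φ j) - C (β (m+1)) * A
        = ∑ j ∈ range (m+1), C ((β j - β (m+1)) * η (m+1) j) * φ j := by
      rw [hA, Finset.mul_sum, ← Finset.sum_sub_distrib]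
      refine Finset.sum_congr rfl fun j _ => ?_
      simp only [map_mul, map_sub]
      ring
    have hsplit : (∑ k ∈ range (m+2), C ((if k = m+1 then (1:ℝ) else 0)
        + (if k = 0 then 0 else α (k-1) * η (m+1) (k-1))
        + (if k < m+1 then (β k - β (m+1)) * η (m+1) k else 0)
        + (if k < m then γ (k+1) * η (m+1) (k+1) else 0)
        - (if k < m then γ (m+1) * η m k else 0)) * φ k)
        = (∑ k ∈ range (m+2), C (if k = m+1 then (1:ℝ) else 0) * φ k)
        + (∑ k ∈ range (m+2), C (if k = 0 then (0:ℝ) else α (k-1) * η (m+1) (k-1)) * φ k)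
        + (∑ k ∈ range (m+2), C (if k < m+1 then (β k - β (m+1)) * η (m+1) k else (0:ℝ)) * φ k)
        + (∑ k ∈ range (m+2), C (if k < m then γ (k+1) * η (m+1) (k+1) else (0:ℝ)) * φ k)
        - (∑ k ∈ range (m+2), C (if k < m then γ (m+1) * η m k else (0:ℝ)) * φ k) := by
      simp only [map_add, map_sub, add_mul, sub_mul, Finset.sum_add_distrib,
        Finset.sum_sub_distrib]
    have hb1 : (∑ k ∈ range (m+2), C (if k = m+1 then (1:ℝ) else 0) * φ k) = φ (m+1) := by
      rw [Finset.sum_eq_single_of_mem (m+1) (by simp)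
        (fun k _ hk => by rw [if_neg hk, map_zero, zero_mul])]
      simp
    have hb3 : (∑ k ∈ range (m+2), C (if k < m+1 then (β k - β (m+1)) * η (m+1) k else (0:ℝ)) * φ k)
        = ∑ j ∈ range (m+1), C ((β j - β (m+1)) * η (m+1) j) * φ j := by
      rw [Finset.sum_range_succ, if_neg (lt_irrefl (m+1)), map_zero, zero_mul, add_zero]
      exact Finset.sum_congr rfl fun k hk => by rw [if_pos (Finset.mem_range.mp hk)]
    have hb4 : (∑ k ∈ range (m+2), C (if k < m then γ (k+1) * η (m+1) (k+1) else (0:ℝ)) * φ k)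
        = ∑ k ∈ range m, C (γ (k+1) * η (m+1) (k+1)) * φ k := by
      rw [Finset.sum_range_succ, Finset.sum_range_succ,
        if_neg (show ¬ m + 1 < m by omega), if_neg (show ¬ m < m by omega)]
      simp only [map_zero, zero_mul, add_zero]
      exact Finset.sum_congr rfl fun k hk => by rw [if_pos (Finset.mem_range.mp hk)]
    have hb5 : (∑ k ∈ range (m+2), C (if k < m then γ (m+1) * η m k else (0:ℝ)) * φ k)
        = C (γ (m+1)) * B := by
      rw [Finset.sum_range_succ, Finset.sum_range_succ,
        if_neg (show ¬ m + 1 < m by omega), if_neg (show ¬ m < m by omega)]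
      simp only [map_zero, zero_mul, add_zero]
      rw [hB, Finset.mul_sum]
      refine Finset.sum_congr rfl fun k hk => ?_
      rw [if_pos (Finset.mem_range.mp hk), map_mul, mul_assoc]
    rw [hL, hsplit, hb1, hb3, hb4, hb5, hS1]
    -- hd : φ (m+1) + X * A = C (α (m+1)) * S + C (β (m+1)) * A + C (γ (m+1)) * B
    linear_combination -hd + hXA + hS3 + hbeta
  intro k hk
  exact aux_eq φ hdeg hφ0 (m+2) _ _ key k hk

/-- for a polynomial family satisfying a three-term recurrence
`tφᵢ = αᵢφ_{i+1} + βᵢφᵢ + γᵢφ_{i−1}`, the coefficients `η_{i,j}` of the expansion of `φᵢ'`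
in the basis `{φⱼ}` satisfy the stated recurrence. -/
theorem derivative_coeff_recurrence_three_term
    (φ : ℕ → Polynomial ℝ) (α β γ : ℕ → ℝ)
    (hα : ∀ i : ℕ, α i ≠ 0)
    (hdeg : ∀ i : ℕ, (φ i).natDegree = i)
    (hφ0 : φ 0 = 1)
    (hφ1 : Polynomial.C (α 0) * φ 1 = Polynomial.X - Polynomial.C (β 0))
    (hrec : ∀ i : ℕ, 1 ≤ i →
      Polynomial.X * φ i =
        Polynomial.C (α i) * φ (i + 1) + Polynomial.C (β i) * φ i +
          Polynomial.C (γ i) * φ (i - 1))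
    (η : ℕ → ℕ → ℝ)
    (hη : ∀ i : ℕ, Polynomial.derivative (φ i) =
      ∑ j ∈ Finset.range i, Polynomial.C (η i j) * φ j) :
    (∀ i : ℕ, 1 ≤ i → ∀ j : ℕ, j + 2 ≤ i →
      η (i + 1) j = (1 / α i) *
        ((if j = 0 then 0 else α (j - 1) * η i (j - 1)) + (β j - β i) * η i j +
          γ (j + 1) * η i (j + 1) - γ i * η (i - 1) j)) ∧
    (∀ i : ℕ, 1 ≤ i →
      η (i + 1) i = (1 / α i) * (α (i - 1) * η i (i - 1) + 1)) := by
  constructor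
  · intro i hi j hj
    obtain ⟨m, rfl⟩ : ∃ m, i = m + 1 := ⟨i - 1, by omega⟩
    have h := aux_master φ α β γ hdeg hφ0 hφ1 hrec η hη m j (by omega)
    rw [if_neg (show ¬ j = m + 1 by omega), if_pos (show j < m + 1 by omega),
      if_pos (show j < m by omega), if_pos (show j < m by omega), zero_add] at h
    simp only [Nat.add_sub_cancel]
    have hne := hα (m+1)
    field_simp
    linear_combination h
  · intro i hi
    obtain ⟨m, rfl⟩ : ∃ m, i = m + 1 := ⟨i - 1, by omega⟩
    have h := aux_master φ α β γ hdeg hφ0 hφ1 hrec η hη m (m+1) (by omega)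
    rw [if_pos rfl, if_neg (show ¬ m + 1 = 0 by omega),
      if_neg (show ¬ m + 1 < m + 1 by omega), if_neg (show ¬ m + 1 < m by omega),
      if_neg (show ¬ m + 1 < m by omega)] at h
    simp only [Nat.add_sub_cancel] at h ⊢
    have hne := hα (m+1)
    field_simp
    linear_combination h
end

section
/- Let y = Σ c_k T_k be a formal Chebyshev series with c_{p+1} ≠ 0 for some p ≥ 1. Define b_0 = −(c'_p + c_{p+2})/(2c_{p+1}) where c'_0 = 2c_0 and c'_k = c_k for k ≥ 1. Then the coefficient of T_{p+1} in the formal Chebyshev expansion of (b_0 + t)·y(t) − N_{p,1}(t) vanishes, where N_{p,1} = (1/2)Σ_{k=0}^p (c'_{k−1} + c_{k+1} + 2b_0 c_k)T_k with c'_{−1} = 0. Hence N_{p,1}/(b_0 + t) is the (p,1) Chebyshev–Frobenius–Padé approximant of y. -/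
/-- Modified coefficients: `c'_0 = 2c_0`, `c'_k = c_k` for `k ≥ 1`. -/
noncomputable def chebMod (c : ℕ → ℝ) : ℕ → ℝ := fun k => if k = 0 then 2 * c 0 else c k

/-- Coefficient of `T_m` in the formal Chebyshev expansion of `t·y(t)`, where
`y = Σ c_k T_k`: it equals `c_1/2` for `m = 0` and `(c'_{m−1} + c_{m+1})/2` for `m ≥ 1`. -/
noncomputable def chebXmulCoeff (c : ℕ → ℝ) : ℕ → ℝ := fun m =>
  if m = 0 then c 1 / 2 else (chebMod c (m - 1) + c (m + 1)) / 2

/-- with `b₀ = −(c'_p + c_{p+2})/(2c_{p+1})` and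
`N_{p,1} = (1/2)Σ_{k=0}^p (c'_{k−1} + c_{k+1} + 2b₀c_k)T_k` (with `c'_{−1} = 0`), all the
Chebyshev coefficients of `T_0, …, T_{p+1}` in `(b₀ + t)·y(t) − N_{p,1}(t)` vanish; hence
`N_{p,1}/(b₀ + t)` is the `(p,1)` Chebyshev–Frobenius–Padé approximant of `y`. -/
theorem chebyshev_pade_p1 (c : ℕ → ℝ) (p : ℕ) (hp : 1 ≤ p) (hc : c (p + 1) ≠ 0) :
    ∀ m : ℕ, m ≤ p + 1 →
      (-(chebMod c p + c (p + 2)) / (2 * c (p + 1))) * c m + chebXmulCoeff c m -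
        (if m ≤ p then
          (1 / 2) * ((if m = 0 then 0 else chebMod c (m - 1)) + c (m + 1) +
            2 * (-(chebMod c p + c (p + 2)) / (2 * c (p + 1))) * c m)
        else 0) = 0 := by
  intro m hm
  by_cases hmp : m ≤ p
  · simp only [if_pos hmp, chebXmulCoeff]
    by_cases h0 : m = 0
    · subst h0; simp; ring
    · simp only [if_neg h0]; ring
  · have hm1 : m = p + 1 := le_antisymm hm (Nat.not_le.mp hmp)
    subst hm1
    simp only [if_neg hmp, chebXmulCoeff, Nat.add_sub_cancel,
      Nat.succ_ne_zero, if_false]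
    field_simp
    ring
end

section
/- Scaling invariance of Frobenius–Padé approximants: under the hypothesis d_i = ρ c_i for i = 0,…,n with ρ ≠ 0 and H_y^{[p/q]} nonsingular, for p + 2q ≤ n: (i) H_z^{[p/q]} is nonsingular; (ii) the normalized denominator coefficients coincide, D_{p,q}(z) = D_{p,q}(y); (iii) the numerators satisfy N_{p,q}(z) = ρ N_{p,q}(y); hence (iv) Φ_{p,q}(z) = ρ Φ_{p,q}(y) as rational functions, and in particular Φ_{p,q}(z) and Φ_{p,q}(y) have the same poles. -/
open Polynomial

noncomputable def frobH (α β γ μ e : ℕ → ℝ) : ℕ → ℕ → ℝ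
  | i, 0 => e i
  | 0, j + 1 => (μ (j + 1) / μ 0) * e (j + 1)
  | i + 1, 1 => (1 / α 0) *
      ((μ (i + 2) / μ (i + 1)) * α (i + 1) * frobH α β γ μ e (i + 2) 0 +
        (β (i + 1) - β 0) * frobH α β γ μ e (i + 1) 0 +
        (μ i / μ (i + 1)) * γ (i + 1) * frobH α β γ μ e i 0)
  | i + 1, j + 2 => (1 / α (j + 1)) *
      ((μ (i + 2) / μ (i + 1)) * α (i + 1) * frobH α β γ μ e (i + 2) (j + 1) +
        (β (i + 1) - β (j + 1)) * frobH α β γ μ e (i + 1) (j + 1) +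
        (μ i / μ (i + 1)) * γ (i + 1) * frobH α β γ μ e i (j + 1) -
        γ (j + 1) * frobH α β γ μ e (i + 1) j)
  termination_by i j => j

lemma frobH_scale (α β γ μ c d : ℕ → ℝ) (ρ : ℝ) (n : ℕ)
    (hd : ∀ k : ℕ, k ≤ n → d k = ρ * c k) :
    ∀ j i, i + j ≤ n → frobH α β γ μ d i j = ρ * frobH α β γ μ c i j := by
  intro j
  induction j using Nat.strong_induction_on with
  | _ j ih =>
    match j with
    | 0 => intro i hi; simp only [frobH]; exact hd i (by omega)
    | 1 =>
      intro i hi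
      match i with
      | 0 => simp only [frobH]; rw [hd 1 (by omega)]; ring
      | i + 1 =>
        simp only [frobH]
        rw [hd (i+2) (by omega), hd (i+1) (by omega), hd i (by omega)]
        ring
    | j + 2 =>
      intro i hi
      match i with
      | 0 => simp only [frobH]; rw [hd (j+2) (by omega)]; ring
      | i + 1 =>
        simp only [frobH]
        rw [ih (j+1) (by omega) (i+2) (by omega), ih (j+1) (by omega) (i+1) (by omega),
          ih (j+1) (by omega) i (by omega), ih j (by omega) (i+1) (by omega)]
        ring

/-- scaling invariance of Frobenius–Padé approximants. If `dᵢ = ρcᵢ` for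
`i ≤ n`, `ρ ≠ 0` and `H_y^{[p/q]}` is nonsingular, then for `p + 2q ≤ n`: (i) `H_z^{[p/q]}`
is nonsingular; (ii) the normalized denominator coefficients coincide (`b_z = b_y`);
(iii) the numerator coefficients satisfy `a_z = ρ a_y`; hence (iv) `Φ_{p,q}(z) = ρΦ_{p,q}(y)`
as rational functions — in particular they have the same (common, monic-normalized)
denominator, hence the same poles. -/
theorem frobenius_pade_approximant_scaling
    (α β γ μ : ℕ → ℝ) (hα : ∀ j, α j ≠ 0)
    (c d : ℕ → ℝ) (ρ : ℝ) (hρ : ρ ≠ 0) (n : ℕ)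
    (hd : ∀ i : ℕ, i ≤ n → d i = ρ * c i)
    (p q : ℕ) (hq : 1 ≤ q) (hpq : p + 2 * q ≤ n)
    (hHy : (Matrix.of fun i j : Fin q =>
      frobH α β γ μ c (p + 1 + (i : ℕ)) (j : ℕ)).det ≠ 0) :
    (Matrix.of fun i j : Fin q =>
      frobH α β γ μ d (p + 1 + (i : ℕ)) (j : ℕ)).det ≠ 0 ∧
    ∀ bY bZ : Fin q → ℝ,
      (Matrix.of fun i j : Fin q =>
          frobH α β γ μ c (p + 1 + (i : ℕ)) (j : ℕ)).mulVec bY =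
        (fun i : Fin q => -frobH α β γ μ c (p + 1 + (i : ℕ)) q) →
      (Matrix.of fun i j : Fin q =>
          frobH α β γ μ d (p + 1 + (i : ℕ)) (j : ℕ)).mulVec bZ =
        (fun i : Fin q => -frobH α β γ μ d (p + 1 + (i : ℕ)) q) →
      bZ = bY ∧
      (∀ k : ℕ, k ≤ p →
        (∑ j : Fin q, frobH α β γ μ d k (j : ℕ) * bZ j) + frobH α β γ μ d k q =
          ρ * ((∑ j : Fin q, frobH α β γ μ c k (j : ℕ) * bY j) + frobH α β γ μ c k q)) ∧
      (∀ φ : ℕ → Polynomial ℝ, ∀ t : ℝ,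
        (φ q).eval t + (∑ j : Fin q, bY j * (φ (j : ℕ)).eval t) ≠ 0 →
        (∑ k ∈ Finset.range (p + 1),
            ((∑ j : Fin q, frobH α β γ μ d k (j : ℕ) * bZ j) + frobH α β γ μ d k q) *
              (φ k).eval t) /
          ((φ q).eval t + (∑ j : Fin q, bZ j * (φ (j : ℕ)).eval t)) =
        ρ * ((∑ k ∈ Finset.range (p + 1),
            ((∑ j : Fin q, frobH α β γ μ c k (j : ℕ) * bY j) + frobH α β γ μ c k q) *
              (φ k).eval t) /
          ((φ q).eval t + (∑ j : Fin q, bY j * (φ (j : ℕ)).eval t)))) := by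
  have hsc : ∀ j i : ℕ, i + j ≤ n →
      frobH α β γ μ d i j = ρ * frobH α β γ μ c i j :=
    frobH_scale α β γ μ c d ρ n hd
  set Hc : Matrix (Fin q) (Fin q) ℝ :=
    Matrix.of fun i j : Fin q => frobH α β γ μ c (p + 1 + (i : ℕ)) (j : ℕ) with hHc
  have hmat : (Matrix.of fun i j : Fin q =>
      frobH α β γ μ d (p + 1 + (i : ℕ)) (j : ℕ)) = ρ • Hc := by
    ext i j
    simp only [Matrix.of_apply, Matrix.smul_apply, smul_eq_mul, hHc]
    exact hsc j (p + 1 + i) (by have := i.isLt; have := j.isLt; omega)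
  have hdet : (ρ • Hc).det ≠ 0 := by
    rw [Matrix.det_smul]
    exact mul_ne_zero (pow_ne_zero _ hρ) hHy
  refine ⟨by rw [hmat]; exact hdet, ?_⟩
  intro bY bZ hY hZ
  rw [hmat] at hZ
  have hZ' : Hc.mulVec bZ = Hc.mulVec bY := by
    have : ρ • Hc.mulVec bZ = ρ • Hc.mulVec bY := by
      rw [← Matrix.smul_mulVec, hZ, hY]
      funext i
      simp only [Pi.smul_apply, smul_eq_mul]
      rw [hsc q (p + 1 + i) (by have := i.isLt; omega)]
      ring
    exact smul_right_injective _ hρ this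
  have hbZ : bZ = bY := by
    have hu : IsUnit Hc := (Matrix.isUnit_iff_isUnit_det Hc).2 (isUnit_iff_ne_zero.2 hHy)
    exact Matrix.mulVec_injective_iff_isUnit.2 hu hZ'
  refine ⟨hbZ, ?_, ?_⟩
  · intro k hk
    subst hbZ
    rw [hsc q k (by omega)]
    rw [mul_add, Finset.mul_sum, add_right_cancel_iff]
    refine Finset.sum_congr rfl fun j _ => ?_
    rw [hsc j k (by have := j.isLt; omega)]
    ring
  · intro φ t ht
    subst hbZ
    have hnum : (∑ k ∈ Finset.range (p + 1),
        ((∑ j : Fin q, frobH α β γ μ d k (j : ℕ) * bZ j) + frobH α β γ μ d k q) *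
          (φ k).eval t) =
        ρ * (∑ k ∈ Finset.range (p + 1),
        ((∑ j : Fin q, frobH α β γ μ c k (j : ℕ) * bZ j) + frobH α β γ μ c k q) *
          (φ k).eval t) := by
      rw [Finset.mul_sum]
      refine Finset.sum_congr rfl fun k hk => ?_
      have hk' : k ≤ p := by simpa [Nat.lt_succ_iff] using Finset.mem_range.1 hk
      rw [hsc q k (by omega)]
      rw [show (∑ j : Fin q, frobH α β γ μ d k (j : ℕ) * bZ j) =
          ρ * ∑ j : Fin q, frobH α β γ μ c k (j : ℕ) * bZ j by
        rw [Finset.mul_sum]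
        refine Finset.sum_congr rfl fun j _ => ?_
        rw [hsc j k (by have := j.isLt; omega)]; ring]
      ring
    rw [hnum, mul_div_assoc]
end
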